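/- Let X be a nonnegative integrable random variable on a probability space and let c > 0. Then (E[exp(−c·X/n)])^n converges to exp(−c·E[X]) as n → ∞. -/

import Mathlib

/-!
Write `∫ exp (Y / n) = 1 + gₙ` with `Y = -c X ≤ 0`. Since `|n (exp (y / n) - 1)| ≤ -y`
for `y ≤ 0` and `n (exp (y / n) - 1) → y`, dominated convergence gives `n gₙ → ∫ Y`, and then
`(1 + gₙ) ^ n → exp (∫ Y)`.
-/

open MeasureTheory Filter Topology Real

namespace Real

lemma abs_exp_sub_one_le_neg {x : ℝ} (hx : x ≤ 0) : |exp x - 1| ≤ -x := by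
  rw [abs_of_nonpos (sub_nonpos.2 (exp_le_one_iff.2 hx))]
  linarith [add_one_le_exp x]

lemma abs_nat_mul_exp_div_sub_one_le {y : ℝ} (hy : y ≤ 0) (n : ℕ) :
    |n * (exp (y / n) - 1)| ≤ -y := by
  rcases n.eq_zero_or_pos with rfl | hn
  · simpa using hy
  have hn' : (0 : ℝ) < n := by exact_mod_cast hn
  calc |n * (exp (y / n) - 1)| = n * |exp (y / n) - 1| := by
        rw [abs_mul, abs_of_pos hn']
    _ ≤ n * -(y / n) := by
        gcongr; exact abs_exp_sub_one_le_neg (div_nonpos_of_nonpos_of_nonneg hy hn'.le)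
    _ = -y := by field_simp

lemma tendsto_nat_mul_exp_div_sub_one (y : ℝ) :
    Tendsto (fun n : ℕ => n * (exp (y / n) - 1)) atTop (𝓝 y) := by
  rw [tendsto_iff_norm_sub_tendsto_zero]
  have hbound : ∀ᶠ n : ℕ in atTop, ‖n * (exp (y / n) - 1) - y‖ ≤ y ^ 2 / n := by
    filter_upwards [eventually_ge_atTop ⌈|y|⌉₊, eventually_gt_atTop 0] with n hyn hn
    have hn' : (0 : ℝ) < n := by exact_mod_cast hn
    have hsmall : |y / n| ≤ 1 := by
      rw [abs_div, Nat.abs_cast, div_le_one hn']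
      exact (Nat.le_ceil _).trans (by exact_mod_cast hyn)
    calc ‖n * (exp (y / n) - 1) - y‖ = n * |exp (y / n) - 1 - y / n| := by
          have hsplit : n * (exp (y / n) - 1) - y = n * (exp (y / n) - 1 - y / n) := by
            field_simp
          rw [norm_eq_abs, hsplit, abs_mul, abs_of_pos hn']
      _ ≤ n * (y / n) ^ 2 := by gcongr; exact abs_exp_sub_one_sub_id_le hsmall
      _ = y ^ 2 / n := by field_simp
  exact squeeze_zero' (Eventually.of_forall fun _ => norm_nonneg _) hbound
    (tendsto_const_nhds.div_atTop tendsto_natCast_atTop_atTop)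

end Real

theorem tendsto_integral_exp_div_pow_of_nonpos {Ω : Type*} [MeasurableSpace Ω] {μ : Measure Ω}
    [IsProbabilityMeasure μ] {Y : Ω → ℝ} (hY : Integrable Y μ)
    (hY0 : ∀ᵐ ω ∂μ, Y ω ≤ 0) :
    Tendsto (fun n : ℕ => (∫ ω, exp (Y ω / n) ∂μ) ^ n) atTop
      (𝓝 (exp (∫ ω, Y ω ∂μ))) := by
  have hmeas (n : ℕ) : AEMeasurable (fun ω => exp (Y ω / n)) μ :=
    measurable_exp.comp_aemeasurable (hY.aemeasurable.div_const _)
  have hint (n : ℕ) : Integrable (fun ω => exp (Y ω / n)) μ := by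
    refine .of_mem_Icc 0 1 (hmeas n) ?_
    filter_upwards [hY0] with ω hω
    exact ⟨(exp_pos _).le, exp_le_one_iff.2 (div_nonpos_of_nonpos_of_nonneg hω n.cast_nonneg)⟩
  have hdom : Tendsto (fun n : ℕ => ∫ ω, n * (exp (Y ω / n) - 1) ∂μ) atTop
      (𝓝 (∫ ω, Y ω ∂μ)) := by
    refine tendsto_integral_of_dominated_convergence (fun ω => -Y ω)
      (fun n => (((hmeas n).sub_const 1).const_mul _).aestronglyMeasurable) hY.neg
      (fun n => ?_) (.of_forall fun ω => tendsto_nat_mul_exp_div_sub_one (Y ω))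
    filter_upwards [hY0] with ω hω
    exact abs_nat_mul_exp_div_sub_one_le hω n
  have hmul : Tendsto (fun n : ℕ => n * (∫ ω, exp (Y ω / n) ∂μ - 1)) atTop
      (𝓝 (∫ ω, Y ω ∂μ)) := by
    refine hdom.congr fun n => ?_
    rw [integral_const_mul, integral_sub (hint n) (integrable_const 1), integral_const]
    simp
  simpa using tendsto_one_add_pow_exp_of_tendsto hmul

theorem tendsto_pow_integral_exp_general {Ω : Type*} [MeasurableSpace Ω]
    (μ : Measure Ω) [IsProbabilityMeasure μ] (X : Ω → ℝ)
    (hXpos : ∀ᵐ ω ∂μ, 0 ≤ X ω)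
    (hXint : Integrable X μ) (c : ℝ) (hc : 0 < c) :
    Filter.Tendsto
      (fun n : ℕ => (∫ ω, Real.exp (-c * X ω / n) ∂μ) ^ n)
      Filter.atTop (nhds (Real.exp (-c * ∫ ω, X ω ∂μ))) := by
  have hY0 : ∀ᵐ ω ∂μ, -c * X ω ≤ 0 := by
    filter_upwards [hXpos] with ω hω
    nlinarith
  rw [← integral_const_mul]
  exact tendsto_integral_exp_div_pow_of_nonpos (hXint.const_mul (-c)) hY0

theorem tendsto_pow_integral_exp {Ω : Type*} [MeasurableSpace Ω]
    (μ : Measure Ω) [IsProbabilityMeasure μ] (X : Ω → ℝ)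
    (hXmeas : Measurable X) (hXpos : ∀ᵐ ω ∂μ, 0 ≤ X ω)
    (hXint : Integrable X μ) (c : ℝ) (hc : 0 < c) :
    Filter.Tendsto
      (fun n : ℕ => (∫ ω, Real.exp (-c * X ω / n) ∂μ) ^ n)
      Filter.atTop (nhds (Real.exp (-c * ∫ ω, X ω ∂μ))) :=
  tendsto_pow_integral_exp_general μ X hXpos hXint c hc
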